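/- Let A be a partial positive Hermitian matrix with graph the chordless 4-cycle on {1,2,3,4} (edges 12, 23, 34, 14). Then there exists a value for the (1,3) entry (and its conjugate at (3,1)) such that the resulting principal submatrix A'({1,2,3}) is positive definite and every Hermitian matrix extending A' on {1,3,4} satisfies i₋ ≤ 1; consequently A admits a Hermitian completion M with i₋(M) ≤ 1. -/

import Mathlib

open Matrix ComplexOrder

/-- Number of positive eigenvalues (with multiplicity) of a Hermitian matrix. -/
noncomputable def posCount {m : Type*} [Fintype m] [DecidableEq m]
    {M : Matrix m m ℂ} (hM : M.IsHermitian) : ℕ :=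
  Fintype.card {i // 0 < hM.eigenvalues i}

/-- Number of negative eigenvalues (with multiplicity) of a Hermitian matrix. -/
noncomputable def negCount {m : Type*} [Fintype m] [DecidableEq m]
    {M : Matrix m m ℂ} (hM : M.IsHermitian) : ℕ :=
  Fintype.card {i // hM.eigenvalues i < 0}

/-- Number of zero eigenvalues (with multiplicity) of a Hermitian matrix. -/
noncomputable def zeroCount {m : Type*} [Fintype m] [DecidableEq m]
    {M : Matrix m m ℂ} (hM : M.IsHermitian) : ℕ :=
  Fintype.card {i // hM.eigenvalues i = 0}

/-- `A` is a partial Hermitian matrix with graph `G`: the diagonal is real and the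
specified (edge) entries are conjugate symmetric.  Non-edge entries of the array `A`
are regarded as unspecified. -/
def IsPartialHermitian {n : ℕ} (G : SimpleGraph (Fin n)) (A : Matrix (Fin n) (Fin n) ℂ) : Prop :=
  (∀ i : Fin n, (A i i).im = 0) ∧ ∀ i j : Fin n, G.Adj i j → A j i = star (A i j)

/-- The principal submatrix of `A` indexed by `K`. -/
def cliqueSub {n : ℕ} (A : Matrix (Fin n) (Fin n) ℂ) (K : Finset (Fin n)) :
    Matrix K K ℂ :=
  A.submatrix (fun i => (i : Fin n)) (fun j => (j : Fin n))

/-- `A` is a partial positive matrix with graph `G`: it is partial Hermitian and every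
fully specified principal submatrix `A(K)`, `K` a clique of `G`, is positive definite. -/
def IsPartialPositive {n : ℕ} (G : SimpleGraph (Fin n)) (A : Matrix (Fin n) (Fin n) ℂ) : Prop :=
  IsPartialHermitian G A ∧
    ∀ K : Finset (Fin n), G.IsClique (K : Set (Fin n)) → (cliqueSub A K).PosDef

/-- The completion number of `G` is `c`: `c` is the least `k` such that every partial
positive matrix with graph `G` has a Hermitian completion with at most `k` negative
eigenvalues. -/
def CompletionNumberIs {n : ℕ} (G : SimpleGraph (Fin n)) (c : ℕ) : Prop :=
  IsLeast {k : ℕ | ∀ A : Matrix (Fin n) (Fin n) ℂ, IsPartialPositive G A →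
    ∃ M : Matrix (Fin n) (Fin n) ℂ, ∃ hM : M.IsHermitian,
      (∀ i j : Fin n, (i = j ∨ G.Adj i j) → M i j = A i j) ∧ negCount hM ≤ k} c

/-- The cycle graph on `Fin n`: `i` is adjacent to `i + 1 (mod n)`. -/
def cycleG (n : ℕ) : SimpleGraph (Fin n) :=
  SimpleGraph.fromRel (fun i j => (j : ℕ) = ((i : ℕ) + 1) % n)

/-! ### Auxiliary lemmas -/

lemma herm_form_real {m : Type*} [Fintype m] {M : Matrix m m ℂ} (hM : M.IsHermitian)
    (v : m → ℂ) : (star v ⬝ᵥ (M *ᵥ v)).im = 0 := by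
  rw [← Complex.conj_eq_iff_im]
  calc (starRingEnd ℂ) (star v ⬝ᵥ (M *ᵥ v))
      = star (star v ⬝ᵥ (M *ᵥ v)) := rfl
    _ = star (M *ᵥ v) ⬝ᵥ star (star v) := by rw [star_dotProduct_star]
    _ = star v ⬝ᵥ (M *ᵥ v) := by
        rw [star_star, star_mulVec, ← dotProduct_mulVec, hM.eq]

lemma neg_le_one {m : Type*} [Fintype m] [DecidableEq m] {M : Matrix m m ℂ}
    (hM : M.IsHermitian) (k₀ : m)
    (h : ∀ v : m → ℂ, v ≠ 0 → v k₀ = 0 → 0 < (star v ⬝ᵥ (M *ᵥ v)).re) :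
    negCount hM ≤ 1 := by
  by_contra hc
  push_neg at hc
  obtain ⟨⟨i, hi⟩, ⟨j, hj⟩, hij⟩ := Fintype.exists_pair_of_one_lt_card hc
  have hij' : i ≠ j := fun h' => hij (by simpa using h')
  set b := hM.eigenvectorBasis with hb
  set c : ℂ := if (b i) k₀ = 0 then 1 else (b j) k₀ with hc'
  set d : ℂ := if (b i) k₀ = 0 then 0 else -((b i) k₀) with hd'
  set v : m → ℂ := c • ⇑(b i) + d • ⇑(b j) with hv
  have hvk : v k₀ = 0 := by
    by_cases h0 : (b i) k₀ = 0 <;> simp [hv, hc', hd', h0] <;> ring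
  have hcd : c ≠ 0 ∨ d ≠ 0 := by
    by_cases h0 : (b i) k₀ = 0
    · left; simp [hc', h0]
    · right; simpa [hd', h0] using h0
  have horth := hM.eigenvectorBasis.orthonormal
  have hbi : ∀ k l : m, (star ⇑(b k)) ⬝ᵥ ⇑(b l) = if k = l then 1 else 0 := by
    intro k l
    have := orthonormal_iff_ite.mp horth k l
    rw [PiLp.inner_apply] at this
    simpa [dotProduct, mul_comm] using this
  have hvne : v ≠ 0 := by
    intro h0
    have hic : (star ⇑(b i)) ⬝ᵥ v = c := by
      simp [hv, dotProduct_add, dotProduct_smul, hbi, hij']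
    have hjc : (star ⇑(b j)) ⬝ᵥ v = d := by
      simp [hv, dotProduct_add, dotProduct_smul, hbi, hij'.symm]
    rw [h0] at hic hjc
    simp at hic hjc
    rcases hcd with h' | h' <;> [exact h' hic.symm; exact h' hjc.symm]
  have hMv : M *ᵥ v = (c * hM.eigenvalues i) • ⇑(b i) + (d * hM.eigenvalues j) • ⇑(b j) := by
    rw [hv, mulVec_add, mulVec_smul, mulVec_smul, hM.mulVec_eigenvectorBasis,
      hM.mulVec_eigenvectorBasis]
    ext k
    simp
    ring
  have hform : (star v ⬝ᵥ (M *ᵥ v)) =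
      (hM.eigenvalues i) * Complex.normSq c + (hM.eigenvalues j) * Complex.normSq d := by
    rw [hMv, hv]
    simp only [star_add, star_smul, add_dotProduct, dotProduct_add, smul_dotProduct,
      dotProduct_smul, hbi, hij', hij'.symm, if_true, if_false, ite_true, ite_false]
    simp [Complex.normSq_eq_conj_mul_self]
    ring
  have hre : (star v ⬝ᵥ (M *ᵥ v)).re ≤ 0 := by
    rw [hform]
    have h1 : (hM.eigenvalues i) * Complex.normSq c ≤ 0 :=
      mul_nonpos_of_nonpos_of_nonneg (le_of_lt hi) (Complex.normSq_nonneg c)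
    have h2 : (hM.eigenvalues j) * Complex.normSq d ≤ 0 :=
      mul_nonpos_of_nonpos_of_nonneg (le_of_lt hj) (Complex.normSq_nonneg d)
    simp only [Complex.add_re, Complex.mul_re]
    simp [Complex.ofReal_re]
    nlinarith [h1, h2]
  exact absurd (h v hvne hvk) (not_lt.mpr hre)

lemma core_pos (p d q : ℝ) (a b x : ℂ) (hpd : Complex.normSq a < p * d)
    (hdq : Complex.normSq b < d * q) (hd : 0 < d) (hx : (d : ℂ) * x = a * b)
    (v0 v1 v2 : ℂ) (hv : ¬(v0 = 0 ∧ v1 = 0 ∧ v2 = 0)) :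
    0 < ((starRingEnd ℂ) v0 * ((p : ℂ) * v0 + a * v1 + x * v2)
        + (starRingEnd ℂ) v1 * ((starRingEnd ℂ) a * v0 + (d : ℂ) * v1 + b * v2)
        + (starRingEnd ℂ) v2 * ((starRingEnd ℂ) x * v0 + (starRingEnd ℂ) b * v1 + (q : ℂ) * v2)).re := by
  obtain ⟨hre, him⟩ := Complex.ext_iff.mp hx
  have key : d * ((starRingEnd ℂ) v0 * ((p : ℂ) * v0 + a * v1 + x * v2)
        + (starRingEnd ℂ) v1 * ((starRingEnd ℂ) a * v0 + (d : ℂ) * v1 + b * v2)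
        + (starRingEnd ℂ) v2 * ((starRingEnd ℂ) x * v0 + (starRingEnd ℂ) b * v1 + (q : ℂ) * v2)).re
      = Complex.normSq ((starRingEnd ℂ) a * v0 + (d : ℂ) * v1 + b * v2)
        + (p * d - Complex.normSq a) * Complex.normSq v0
        + (d * q - Complex.normSq b) * Complex.normSq v2 := by
    simp only [Complex.normSq_apply, Complex.add_re, Complex.add_im, Complex.mul_re,
      Complex.mul_im, Complex.conj_re, Complex.conj_im, Complex.ofReal_re, Complex.ofReal_im] at *
    linear_combination (2*(v0.re*v2.re + v0.im*v2.im)) * hre - (2*(v0.re*v2.im - v0.im*v2.re)) * him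
  have hns0 : (0:ℝ) ≤ Complex.normSq ((starRingEnd ℂ) a * v0 + (d : ℂ) * v1 + b * v2) :=
    Complex.normSq_nonneg _
  rcases Classical.em (v0 = 0) with h0 | h0
  · rcases Classical.em (v2 = 0) with h2 | h2
    · have h1 : v1 ≠ 0 := by tauto
      have : 0 < Complex.normSq ((starRingEnd ℂ) a * v0 + (d : ℂ) * v1 + b * v2) := by
        rw [h0, h2]
        simp only [mul_zero, zero_add, add_zero]
        refine Complex.normSq_pos.mpr (mul_ne_zero (by exact_mod_cast hd.ne') h1)
      nlinarith [Complex.normSq_nonneg v0, Complex.normSq_nonneg v2]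
    · have h2' : 0 < Complex.normSq v2 := Complex.normSq_pos.mpr h2
      nlinarith [Complex.normSq_nonneg v0]
  · have h0' : 0 < Complex.normSq v0 := Complex.normSq_pos.mpr h0
    nlinarith [Complex.normSq_nonneg v2]

lemma posDef_submatrix_equiv {n m : Type*} [Fintype n] [DecidableEq n] [Fintype m]
    [DecidableEq m] {M : Matrix n n ℂ} (hM : M.PosDef) (e : m ≃ n) :
    (M.submatrix e e).PosDef := by
  refine PosDef.of_dotProduct_mulVec_pos (hM.1.submatrix e) fun x hx => ?_
  have hx' : x ∘ e.symm ≠ 0 := fun h => hx (funext fun i => by simpa using congrFun h (e i))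
  have h2 := hM.dotProduct_mulVec_pos hx'
  convert h2 using 1
  rw [submatrix_mulVec_equiv]
  simp only [dotProduct]
  exact Fintype.sum_equiv e _ _ (fun i => by simp)

lemma edge2 {B : Matrix (Fin 2) (Fin 2) ℂ} (hB : B.PosDef) :
    0 < (B 0 0).re ∧ 0 < (B 1 1).re ∧ Complex.normSq (B 0 1) < (B 0 0).re * (B 1 1).re := by
  have h10 : B 1 0 = (starRingEnd ℂ) (B 0 1) := (congrFun (congrFun hB.1.symm 1) 0)
  have h00im : (B 0 0).im = 0 := by
    have := congrFun (congrFun hB.1.symm 0) 0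
    have := congrArg Complex.im this
    simp [conjTranspose_apply] at this
    linarith
  have h11im : (B 1 1).im = 0 := by
    have := congrFun (congrFun hB.1.symm 1) 1
    have := congrArg Complex.im this
    simp [conjTranspose_apply] at this
    linarith
  have h0 : 0 < (B 0 0).re := by
    have := hB.dotProduct_mulVec_pos (x := ![1, 0]) (by intro h; simpa using congrFun h 0)
    have := (Complex.lt_def.mp this).1
    simpa [dotProduct, mulVec, Fin.sum_univ_two] using this
  have h1 : 0 < (B 1 1).re := by
    have := hB.dotProduct_mulVec_pos (x := ![0, 1]) (by intro h; simpa using congrFun h 1)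
    have := (Complex.lt_def.mp this).1
    simpa [dotProduct, mulVec, Fin.sum_univ_two] using this
  refine ⟨h0, h1, ?_⟩
  have hB11ne : B 1 1 ≠ 0 := by
    intro h; rw [h] at h1; simp at h1
  have hq := hB.dotProduct_mulVec_pos (x := ![B 1 1, -(B 1 0)]) (by
    intro h
    exact hB11ne (by simpa using congrFun h 0))
  have hre := (Complex.lt_def.mp hq).1
  have hform : (star ![B 1 1, -(B 1 0)] ⬝ᵥ (B *ᵥ ![B 1 1, -(B 1 0)])).re
      = (B 1 1).re * ((B 0 0).re * (B 1 1).re - Complex.normSq (B 0 1)) := by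
    simp only [dotProduct, mulVec, Fin.sum_univ_two, Pi.star_apply, Matrix.cons_val_zero,
      Matrix.cons_val_one, Matrix.head_cons, h10]
    have hb11 : B 1 1 = ((B 1 1).re : ℂ) := Complex.ext rfl (by simp [h11im])
    rw [hb11]
    simp [Complex.ext_iff, Complex.normSq_apply, Complex.add_re, Complex.mul_re, Complex.mul_im,
      Complex.conj_re, Complex.conj_im]
    ring_nf
  rw [Complex.zero_re] at hre
  rw [hform] at hre
  nlinarith [h1]

lemma dot_equiv {K : Type*} [Fintype K] {k : ℕ} (e : Fin k ≃ K) (N : Matrix K K ℂ) (v : K → ℂ) :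
    star v ⬝ᵥ (N *ᵥ v)
      = ∑ i : Fin k, (starRingEnd ℂ) (v (e i)) * ∑ j : Fin k, N (e i) (e j) * v (e j) := by
  simp only [dotProduct, mulVec, dotProduct, Pi.star_apply, Complex.star_def]
  rw [← Equiv.sum_comp e (fun y => (starRingEnd ℂ) (v y) * ∑ j, N y j * v j)]
  refine Finset.sum_congr rfl fun i _ => ?_
  congr 1
  rw [← Equiv.sum_comp e (fun y => N (e i) y * v y)]

def eq01 : Fin 2 ≃ ↥({0,1} : Finset (Fin 4)) where
  toFun := ![⟨0, by decide⟩, ⟨1, by decide⟩]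
  invFun := fun y => if (y : Fin 4) = 0 then 0 else 1
  left_inv := by decide
  right_inv := by decide

def eq12 : Fin 2 ≃ ↥({1,2} : Finset (Fin 4)) where
  toFun := ![⟨1, by decide⟩, ⟨2, by decide⟩]
  invFun := fun y => if (y : Fin 4) = 1 then 0 else 1
  left_inv := by decide
  right_inv := by decide

def eq012 : Fin 3 ≃ ↥({0,1,2} : Finset (Fin 4)) where
  toFun := ![⟨0, by decide⟩, ⟨1, by decide⟩, ⟨2, by decide⟩]
  invFun := fun y => if (y : Fin 4) = 0 then 0 else if (y : Fin 4) = 1 then 1 else 2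
  left_inv := by decide
  right_inv := by decide

def eq023 : Fin 3 ≃ ↥({0,2,3} : Finset (Fin 4)) where
  toFun := ![⟨0, by decide⟩, ⟨2, by decide⟩, ⟨3, by decide⟩]
  invFun := fun y => if (y : Fin 4) = 0 then 0 else if (y : Fin 4) = 2 then 1 else 2
  left_inv := by decide
  right_inv := by decide


/-- For a partial positive matrix `A` on the chordless 4-cycle, there is a value `x`
for the `(1,3)` entry (here `(0,2)`) such that the resulting `A'({1,2,3})` is positive
definite and the fully specified `A'({1,3,4})` has at most one negative eigenvalue;
consequently `A` has a Hermitian completion with at most one negative eigenvalue. -/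
theorem stmt19 (A : Matrix (Fin 4) (Fin 4) ℂ) (hA : IsPartialPositive (cycleG 4) A) :
    (∃ x : ℂ,
      let A' : Matrix (Fin 4) (Fin 4) ℂ := fun i j =>
        if i = 0 ∧ j = 2 then x else if i = 2 ∧ j = 0 then star x else A i j
      (cliqueSub A' ({0, 1, 2} : Finset (Fin 4))).PosDef ∧
        ∀ hH : (cliqueSub A' ({0, 2, 3} : Finset (Fin 4))).IsHermitian, negCount hH ≤ 1) ∧
    ∃ M : Matrix (Fin 4) (Fin 4) ℂ, ∃ hM : M.IsHermitian,
      (∀ i j : Fin 4, (i = j ∨ (cycleG 4).Adj i j) → M i j = A i j) ∧ negCount hM ≤ 1 := by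
  obtain ⟨⟨hdiag, hsym⟩, hcl⟩ := hA
  have adj01 : (cycleG 4).Adj 0 1 := by simp [cycleG, SimpleGraph.fromRel_adj]
  have adj12 : (cycleG 4).Adj 1 2 := by simp [cycleG, SimpleGraph.fromRel_adj]
  have adj23 : (cycleG 4).Adj 2 3 := by
    simp only [cycleG, SimpleGraph.fromRel_adj]; exact ⟨by decide, Or.inl (by decide)⟩
  have adj30 : (cycleG 4).Adj 3 0 := by
    simp only [cycleG, SimpleGraph.fromRel_adj]; exact ⟨by decide, Or.inl (by decide)⟩
  have clique01 : (cycleG 4).IsClique (({0,1} : Finset (Fin 4)) : Set (Fin 4)) := by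
    intro u hu w hw hne
    simp at hu hw
    rcases hu with h | h <;> rcases hw with h' | h' <;> subst h <;> subst h' <;>
      first
        | exact absurd rfl hne
        | simp [cycleG, SimpleGraph.fromRel_adj]
  have clique12 : (cycleG 4).IsClique (({1,2} : Finset (Fin 4)) : Set (Fin 4)) := by
    intro u hu w hw hne
    simp at hu hw
    rcases hu with h | h <;> rcases hw with h' | h' <;> subst h <;> subst h' <;>
      first
        | exact absurd rfl hne
        | simp [cycleG, SimpleGraph.fromRel_adj]
  set p := (A 0 0).re with hp
  set d := (A 1 1).re with hd
  set q := (A 2 2).re with hq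
  have hApp : A 0 0 = (p:ℂ) := Complex.ext (by simp [hp]) (by simpa using hdiag 0)
  have hAdd : A 1 1 = (d:ℂ) := Complex.ext (by simp [hd]) (by simpa using hdiag 1)
  have hAqq : A 2 2 = (q:ℂ) := Complex.ext (by simp [hq]) (by simpa using hdiag 2)
  have h01 := edge2 (posDef_submatrix_equiv (hcl {0,1} clique01) eq01)
  have h12 := edge2 (posDef_submatrix_equiv (hcl {1,2} clique12) eq12)
  have hp0 : 0 < p := h01.1
  have hd0 : 0 < d := h01.2.1
  have hq0 : 0 < q := h12.2.1
  set a := A 0 1 with ha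
  set b := A 1 2 with hb
  have hpd : Complex.normSq a < p * d := h01.2.2
  have hdq : Complex.normSq b < d * q := h12.2.2
  have hdne : (d:ℂ) ≠ 0 := by exact_mod_cast hd0.ne'
  set x : ℂ := a * b / (d:ℂ) with hxdef
  have hx : (d : ℂ) * x = a * b := by
    rw [hxdef]; field_simp
  have hA10 : A 1 0 = (starRingEnd ℂ) a := hsym 0 1 adj01
  have hA21 : A 2 1 = (starRingEnd ℂ) b := hsym 1 2 adj12
  constructor
  · refine ⟨x, ?_⟩
    intro A'
    -- entries of A'
    have e00 : A' 0 0 = (p:ℂ) := hApp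
    have e01 : A' 0 1 = a := rfl
    have e02 : A' 0 2 = x := rfl
    have e10 : A' 1 0 = (starRingEnd ℂ) a := hA10
    have e11 : A' 1 1 = (d:ℂ) := hAdd
    have e12 : A' 1 2 = b := rfl
    have e20 : A' 2 0 = (starRingEnd ℂ) x := rfl
    have e21 : A' 2 1 = (starRingEnd ℂ) b := hA21
    have e22 : A' 2 2 = (q:ℂ) := hAqq
    have hherm : (cliqueSub A' ({0,1,2} : Finset (Fin 4))).IsHermitian := by
      ext i j
      fin_cases i <;> fin_cases j
      · show star (A' 0 0) = A' 0 0
        rw [e00]; simp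
      · show star (A' 1 0) = A' 0 1
        rw [e10, e01]; simp
      · show star (A' 2 0) = A' 0 2
        rw [e20, e02]; simp
      · show star (A' 0 1) = A' 1 0
        rw [e01, e10]; rfl
      · show star (A' 1 1) = A' 1 1
        rw [e11]; simp
      · show star (A' 2 1) = A' 1 2
        rw [e21, e12]; simp
      · show star (A' 0 2) = A' 2 0
        rw [e02, e20]; rfl
      · show star (A' 1 2) = A' 2 1
        rw [e12, e21]; rfl
      · show star (A' 2 2) = A' 2 2
        rw [e22]; simp
    refine ⟨PosDef.of_dotProduct_mulVec_pos hherm fun v hv => ?_, ?_⟩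
    · -- positive definiteness of A'({0,1,2})
      rw [Complex.lt_def]
      refine ⟨?_, by simp [herm_form_real hherm v]⟩
      rw [Complex.zero_re, dot_equiv eq012]
      simp only [Fin.sum_univ_three]
      have E00 : cliqueSub A' ({0,1,2} : Finset (Fin 4)) (eq012 0) (eq012 0) = (p:ℂ) := e00
      have E01 : cliqueSub A' ({0,1,2} : Finset (Fin 4)) (eq012 0) (eq012 1) = a := e01
      have E02 : cliqueSub A' ({0,1,2} : Finset (Fin 4)) (eq012 0) (eq012 2) = x := e02
      have E10 : cliqueSub A' ({0,1,2} : Finset (Fin 4)) (eq012 1) (eq012 0) = (starRingEnd ℂ) a := e10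
      have E11 : cliqueSub A' ({0,1,2} : Finset (Fin 4)) (eq012 1) (eq012 1) = (d:ℂ) := e11
      have E12 : cliqueSub A' ({0,1,2} : Finset (Fin 4)) (eq012 1) (eq012 2) = b := e12
      have E20 : cliqueSub A' ({0,1,2} : Finset (Fin 4)) (eq012 2) (eq012 0) = (starRingEnd ℂ) x := e20
      have E21 : cliqueSub A' ({0,1,2} : Finset (Fin 4)) (eq012 2) (eq012 1) = (starRingEnd ℂ) b := e21
      have E22 : cliqueSub A' ({0,1,2} : Finset (Fin 4)) (eq012 2) (eq012 2) = (q:ℂ) := e22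
      rw [E00, E01, E02, E10, E11, E12, E20, E21, E22]
      have hnv : ¬(v (eq012 0) = 0 ∧ v (eq012 1) = 0 ∧ v (eq012 2) = 0) := by
        rintro ⟨h1, h2, h3⟩
        apply hv
        funext k
        obtain ⟨i, rfl⟩ := eq012.surjective k
        show v (eq012 i) = 0
        fin_cases i
        · exact h1
        · exact h2
        · exact h3
      exact core_pos p d q a b x hpd hdq hd0 hx _ _ _ hnv
    · -- negCount of A'({0,2,3}) ≤ 1
      intro hH
      refine neg_le_one hH ⟨3, by decide⟩ (fun w hw hwk => ?_)
      rw [dot_equiv eq023]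
      simp only [Fin.sum_univ_three]
      have F00 : cliqueSub A' ({0,2,3} : Finset (Fin 4)) (eq023 0) (eq023 0) = (p:ℂ) := e00
      have F01 : cliqueSub A' ({0,2,3} : Finset (Fin 4)) (eq023 0) (eq023 1) = x := e02
      have F10 : cliqueSub A' ({0,2,3} : Finset (Fin 4)) (eq023 1) (eq023 0) = (starRingEnd ℂ) x := e20
      have F11 : cliqueSub A' ({0,2,3} : Finset (Fin 4)) (eq023 1) (eq023 1) = (q:ℂ) := e22
      rw [F00, F01, F10, F11]
      have hwk' : w (eq023 2) = 0 := hwk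
      rw [hwk']
      have hnv : ¬(w (eq023 0) = 0 ∧ (0:ℂ) = 0 ∧ w (eq023 1) = 0) := by
        rintro ⟨h1, -, h3⟩
        apply hw
        funext k
        obtain ⟨i, rfl⟩ := eq023.surjective k
        show w (eq023 i) = 0
        fin_cases i
        · exact h1
        · exact h3
        · exact hwk'
      have hcore := core_pos p d q a b x hpd hdq hd0 hx (w (eq023 0)) 0 (w (eq023 1)) hnv
      simp only [map_zero, mul_zero, zero_mul, add_zero, zero_add] at hcore ⊢
      convert hcore using 2
  · -- the completion
    set M₄ : Matrix (Fin 4) (Fin 4) ℂ := fun i j =>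
        if (i = 1 ∧ j = 3) ∨ (i = 3 ∧ j = 1) then 0
        else if i = 0 ∧ j = 2 then x else if i = 2 ∧ j = 0 then star x else A i j with hM4
    have hM : M₄.IsHermitian := by
      ext i j
      fin_cases i <;> fin_cases j
      · show star (A 0 0) = A 0 0
        rw [hApp]; simp
      · show star (A 1 0) = A 0 1
        rw [hA10]; simp [Complex.star_def]; rfl
      · show star (star x) = x
        simp
      · show star (A 3 0) = A 0 3
        exact (hsym 3 0 adj30).symm
      · show star (A 0 1) = A 1 0
        exact hA10.symm
      · show star (A 1 1) = A 1 1
        rw [hAdd]; simp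
      · show star (A 2 1) = A 1 2
        rw [hA21]; simp [Complex.star_def]; rfl
      · show star (0:ℂ) = 0
        simp
      · show star x = star x
        rfl
      · show star (A 1 2) = A 2 1
        exact hA21.symm
      · show star (A 2 2) = A 2 2
        rw [hAqq]; simp
      · show star (A 3 2) = A 2 3
        simp [hsym 2 3 adj23]
      · show star (A 0 3) = A 3 0
        simp [hsym 3 0 adj30]
      · show star (0:ℂ) = 0
        simp
      · show star (A 2 3) = A 3 2
        exact (hsym 2 3 adj23).symm
      · show star (A 3 3) = A 3 3
        have h33 : A 3 3 = ((A 3 3).re : ℂ) := Complex.ext rfl (by simpa using hdiag 3)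
        rw [h33]; simp
    refine ⟨M₄, hM, ?_, ?_⟩
    · intro i j hij
      fin_cases i <;> fin_cases j <;>
        first
          | rfl
          | exact absurd hij (by simp [cycleG, SimpleGraph.fromRel_adj] <;> decide)
    · refine neg_le_one hM 3 (fun w hw hwk => ?_)
      rw [dot_equiv (Equiv.refl (Fin 4))]
      simp only [Fin.sum_univ_four, Equiv.refl_apply]
      rw [hwk]
      have G00 : M₄ 0 0 = (p:ℂ) := hApp
      have G01 : M₄ 0 1 = a := rfl
      have G02 : M₄ 0 2 = x := rfl
      have G10 : M₄ 1 0 = (starRingEnd ℂ) a := hA10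
      have G11 : M₄ 1 1 = (d:ℂ) := hAdd
      have G12 : M₄ 1 2 = b := rfl
      have G20 : M₄ 2 0 = (starRingEnd ℂ) x := rfl
      have G21 : M₄ 2 1 = (starRingEnd ℂ) b := hA21
      have G22 : M₄ 2 2 = (q:ℂ) := hAqq
      rw [G00, G01, G02, G10, G11, G12, G20, G21, G22]
      have hnv : ¬(w 0 = 0 ∧ w 1 = 0 ∧ w 2 = 0) := by
        rintro ⟨h1, h2, h3⟩
        apply hw
        funext k
        fin_cases k
        · exact h1
        · exact h2
        · exact h3
        · exact hwk
      have hcore := core_pos p d q a b x hpd hdq hd0 hx (w 0) (w 1) (w 2) hnv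
      simp only [map_zero, mul_zero, zero_mul, add_zero, zero_add] at hcore ⊢
      convert hcore using 2
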